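/- arXiv:2208.03555 — 4 statements merged into one kernel-verified Lean document; each statement's English description precedes it below -/
import Mathlib

section
/- Let (W, ≺) be any MN-frame and let p be a propositional variable. The formula □p → □□p is valid in (W, ≺) if and only if (W, ≺) is transitive. -/
/-- Modal formulas: variables, ⊥, →, □. -/
inductive Fml : Type
  | var : ℕ → Fml
  | bot : Fml
  | imp : Fml → Fml → Fml
  | box : Fml → Fml
  deriving DecidableEq

namespace Fml

/-- ¬A is an abbreviation for A → ⊥. -/
def neg (A : Fml) : Fml := imp A bot

/-- ⊤ is an abbreviation for ¬⊥. -/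
def top : Fml := neg bot

/-- A ∧ B is an abbreviation for ¬(A → ¬B). -/
def and (A B : Fml) : Fml := neg (imp A (neg B))

/-- Uniform substitution. -/
def subst (σ : ℕ → Fml) : Fml → Fml
  | var n => σ n
  | bot => bot
  | imp A B => imp (subst σ A) (subst σ B)
  | box A => box (subst σ A)

end Fml

/-- A formula is a propositional tautology if it is true under every valuation
that respects ⊥ and →, treating variables and boxed formulas as atoms. -/
def IsTautology (A : Fml) : Prop :=
  ∀ val : Fml → Bool,
    (val Fml.bot = false) →
    (∀ B C : Fml, val (Fml.imp B C) = (!(val B) || val C)) →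
    val A = true

/-- Provability in the extension of the logic MN by the axioms in `Ax`:
axioms are all propositional tautologies and the members of `Ax`; the rules
are Modus Ponens, Necessitation, and RM. -/
inductive MNProv (Ax : Fml → Prop) : Fml → Prop
  | taut {A : Fml} : IsTautology A → MNProv Ax A
  | ax {A : Fml} : Ax A → MNProv Ax A
  | mp {A B : Fml} : MNProv Ax (A.imp B) → MNProv Ax A → MNProv Ax B
  | nec {A : Fml} : MNProv Ax A → MNProv Ax A.box
  | rm {A B : Fml} : MNProv Ax (A.imp B) → MNProv Ax (A.box.imp B.box)

/-- The axiom P : ¬□⊥. -/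
def AxP : Fml → Prop := fun A => A = (Fml.box Fml.bot).neg

/-- The axiom scheme D : ¬(□B ∧ □¬B). -/
def AxD : Fml → Prop := fun A => ∃ B : Fml, A = ((B.box).and (B.neg.box)).neg

/-- The axiom scheme 4 : □B → □□B. -/
def AxF : Fml → Prop := fun A => ∃ B : Fml, A = B.box.imp B.box.box

def MN : Fml → Prop := MNProv (fun _ => False)
def MNP : Fml → Prop := MNProv AxP
def MND : Fml → Prop := MNProv AxD
def MNF : Fml → Prop := MNProv AxF
def MNPF : Fml → Prop := MNProv (fun A => AxP A ∨ AxF A)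
def MNDF : Fml → Prop := MNProv (fun A => AxD A ∨ AxF A)

/-- An MN-frame: a nonempty set `W` together with a relation between worlds and
nonempty subsets of `W` satisfying monotonicity. -/
structure MNFrame (W : Type*) where
  nonempty : Nonempty W
  rel : W → Set W → Prop
  rel_nonempty : ∀ (x : W) (V : Set W), rel x V → V.Nonempty
  mono : ∀ (x : W) (V U : Set W), rel x V → V ⊆ U → rel x U

/-- `Sat` is a satisfaction relation on the MN-frame `F`. -/
structure IsSat {W : Type*} (F : MNFrame W) (Sat : W → Fml → Prop) : Prop where
  bot : ∀ x : W, ¬ Sat x Fml.bot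
  imp : ∀ (x : W) (A B : Fml), Sat x (A.imp B) ↔ (Sat x A → Sat x B)
  box : ∀ (x : W) (A : Fml), Sat x A.box ↔ ∀ V : Set W, F.rel x V → ∃ y ∈ V, Sat y A

/-- A formula is valid in an MN-frame if it is satisfied at every world under
every satisfaction relation on the frame. -/
def Valid {W : Type*} (F : MNFrame W) (A : Fml) : Prop :=
  ∀ Sat : W → Fml → Prop, IsSat F Sat → ∀ x : W, Sat x A

/-- Transitivity of an MN-frame. -/
def MNFrame.IsTransitive {W : Type*} (F : MNFrame W) : Prop :=
  ∀ (x : W) (V : Set W) (U : W → Set W),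
    F.rel x V → (∀ y ∈ V, F.rel y (U y)) → F.rel x (⋃ y ∈ V, U y)

/-- MNP-frames: every world is related to some subset. -/
def MNFrame.IsMNP {W : Type*} (F : MNFrame W) : Prop :=
  ∀ x : W, ∃ V : Set W, F.rel x V

/-- MND-frames: every world is related to `V` or to its complement. -/
def MNFrame.IsMND {W : Type*} (F : MNFrame W) : Prop :=
  ∀ (x : W) (V : Set W), F.rel x V ∨ F.rel x Vᶜ

/-- The canonical satisfaction relation generated by a valuation. -/
def satF {W : Type*} (F : MNFrame W) (val : W → ℕ → Prop) : Fml → W → Prop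
  | .var n => fun z => val z n
  | .bot => fun _ => False
  | .imp A B => fun z => satF F val A z → satF F val B z
  | .box A => fun z => ∀ V : Set W, F.rel z V → ∃ y ∈ V, satF F val A y

theorem satF_isSat {W : Type*} (F : MNFrame W) (val : W → ℕ → Prop) :
    IsSat F (fun z A => satF F val A z) := by
  constructor
  · intro x h; exact h
  · intro x A B; exact Iff.rfl
  · intro x A; exact Iff.rfl

/-- □p → □□p is valid in an MN-frame iff the frame is transitive. -/
theorem stmt2 {W : Type*} (F : MNFrame W) (p : ℕ) :
    Valid F ((Fml.var p).box.imp (Fml.var p).box.box) ↔ F.IsTransitive := by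
  constructor
  · intro hval x V U hxV hU
    by_contra hnot
    set Big : Set W := ⋃ y ∈ V, U y with hBig
    set val : W → ℕ → Prop := fun z _ => z ∉ Big with hvaldef
    have h := hval (fun z A => satF F val A z) (satF_isSat F val) x
    have hbox : satF F val (Fml.var p).box x := by
      intro V' hV'
      by_contra hc
      push_neg at hc
      have hsub : V' ⊆ Big := by
        intro z hz
        have := hc z hz
        simp only [satF, hvaldef, not_not] at this
        exact this
      exact hnot (F.mono x V' Big hV' hsub)
    have hbb : satF F val (Fml.var p).box.box x := h hbox
    obtain ⟨y, hyV, hy⟩ := hbb V hxV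
    obtain ⟨z, hzU, hz⟩ := hy (U y) (hU y hyV)
    apply hz
    exact Set.mem_biUnion hyV hzU
  · intro htrans Sat hSat x
    rw [hSat.imp]
    intro hbox
    rw [hSat.box] at hbox ⊢
    intro V hxV
    by_contra hc
    push_neg at hc
    have hfail : ∀ y ∈ V, ∃ Uy : Set W, F.rel y Uy ∧ ∀ z ∈ Uy, ¬ Sat z (Fml.var p) := by
      intro y hy
      have := hc y hy
      rw [hSat.box] at this
      push_neg at this
      obtain ⟨Uy, hU1, hU2⟩ := this
      exact ⟨Uy, hU1, hU2⟩
    classical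
    choose! U hU1 hU2 using hfail
    have := htrans x V U hxV hU1
    obtain ⟨z, hz, hzp⟩ := hbox _ this
    simp only [Set.mem_iUnion] at hz
    obtain ⟨y, hy, hzy⟩ := hz
    exact hU2 y hy z hzy hzp
end

section
/- Let (W, ≺) be any MN-frame and let p be a propositional variable. The formula ¬(□p ∧ □¬p) is valid in (W, ≺) if and only if (W, ≺) is an MND-frame. -/
/-- Standard satisfaction relation from a valuation. -/
def stdSat {W : Type*} (F : MNFrame W) (val : W → ℕ → Prop) : Fml → W → Prop
  | Fml.var n => fun x => val x n
  | Fml.bot => fun _ => False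
  | Fml.imp A B => fun x => stdSat F val A x → stdSat F val B x
  | Fml.box A => fun x => ∀ V : Set W, F.rel x V → ∃ y ∈ V, stdSat F val A y

lemma stdSat_isSat {W : Type*} (F : MNFrame W) (val : W → ℕ → Prop) :
    IsSat F (fun x A => stdSat F val A x) where
  bot := fun x h => h
  imp := fun _ _ _ => Iff.rfl
  box := fun _ _ => Iff.rfl

/-- ¬(□p ∧ □¬p) is valid in an MN-frame iff the frame is an
MND-frame. -/
theorem stmt4 {W : Type*} (F : MNFrame W) (p : ℕ) :
    Valid F (((Fml.var p).box.and ((Fml.var p).neg.box)).neg) ↔ F.IsMND := by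
  constructor
  · intro hval x V
    by_contra hc
    push_neg at hc
    obtain ⟨h1, h2⟩ := hc
    have hv := hval (fun x A => stdSat F (fun y n => n = p ∧ y ∈ V) A x)
      (stdSat_isSat F _) x
    simp only [Fml.neg, Fml.and, stdSat] at hv
    apply hv
    intro himp
    apply himp
    · -- □p
      intro U hU
      have : ¬ U ⊆ Vᶜ := fun hsub => h2 (F.mono x U Vᶜ hU hsub)
      rcases Set.not_subset.mp this with ⟨y, hyU, hyV⟩
      exact ⟨y, hyU, by trivial, Set.not_notMem.mp hyV⟩
    · -- □¬p
      intro U hU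
      have : ¬ U ⊆ V := fun hsub => h1 (F.mono x U V hU hsub)
      rcases Set.not_subset.mp this with ⟨y, hyU, hyV⟩
      exact ⟨y, hyU, fun hy => hyV hy.2⟩
  · intro hmnd Sat hSat x
    rw [Fml.neg, hSat.imp]
    intro hand
    rw [Fml.and, Fml.neg, hSat.imp] at hand
    apply hand
    rw [hSat.imp]
    intro hboxp
    rw [Fml.neg, hSat.imp]
    intro hboxnp
    set V : Set W := {y | Sat y (Fml.var p)} with hV
    rcases hmnd x V with h | h
    · rcases (hSat.box x (Fml.var p).neg).mp hboxnp V h with ⟨y, hyV, hy⟩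
      rw [Fml.neg, hSat.imp] at hy
      exact (hSat.bot y (hy hyV)).elim
    · rcases (hSat.box x (Fml.var p)).mp hboxp Vᶜ h with ⟨y, hyV, hy⟩
      exact (hyV hy).elim
end

section
/- For any modal formula A, the following are equivalent: (1) A is a theorem of MN; (2) A is valid in all MN-frames; (3) A is valid in all finite MN-frames. -/
/-!
Soundness is an induction on derivations; Necessitation and RM are sound because neighbourhoods
are nonempty and the neighbourhood relation is monotone.

For completeness, call the subformulas of `A` of the form `p` or `□B` its atoms. A world of the
canonical model is a set `w` of atoms whose characteristic formula `χ w` (the conjunction of the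
atoms in `w` and the negations of the others) is consistent. A formula over these atoms that is
true in every world is provable, as a propositional consequence of the provable formulas `¬ χ w`
for the assignments `w` refuting it. A world `x` is related to `V` when some atom `□C` is false in
`x` and `V` contains every world refuting `C`. In the box case of the truth lemma, if `□B` is true
and `□C` false in `x`, some world makes `B` true and `C` false: otherwise `B → C` is provable,
hence `□B → □C` by RM, contradicting the consistency of `χ x`. Neighbourhoods are nonempty by the
same argument with Necessitation, and the model is finite because there are finitely many atoms.
-/

namespace Fml

def atoms : Fml → Finset Fml
  | var n => {var n}
  | bot => ∅
  | imp B C => B.atoms ∪ C.atoms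
  | box B => {box B}

def subformulas : Fml → Finset Fml
  | var n => {var n}
  | bot => {bot}
  | imp B C => insert (imp B C) (B.subformulas ∪ C.subformulas)
  | box B => insert (box B) B.subformulas

theorem mem_subformulas_self (B : Fml) : B ∈ B.subformulas := by
  cases B <;> simp [subformulas]

theorem subformulas_subset_of_mem {B C : Fml} (h : C ∈ B.subformulas) :
    C.subformulas ⊆ B.subformulas := by
  induction B with
  | var n | bot => simp_all [subformulas]
  | imp B₁ B₂ ih₁ ih₂ =>
    simp only [subformulas, Finset.mem_insert, Finset.mem_union] at h
    rcases h with rfl | h | h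
    · rfl
    · exact (ih₁ h).trans (by simp [subformulas, Finset.subset_iff]; tauto)
    · exact (ih₂ h).trans (by simp [subformulas, Finset.subset_iff]; tauto)
  | box B ih =>
    simp only [subformulas, Finset.mem_insert] at h
    rcases h with rfl | h
    · rfl
    · exact (ih h).trans (Finset.subset_insert _ _)

theorem mem_subformulas_of_imp_left {A B C : Fml} (h : B.imp C ∈ A.subformulas) :
    B ∈ A.subformulas :=
  subformulas_subset_of_mem h (by simp [subformulas, mem_subformulas_self])

theorem mem_subformulas_of_imp_right {A B C : Fml} (h : B.imp C ∈ A.subformulas) :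
    C ∈ A.subformulas :=
  subformulas_subset_of_mem h (by simp [subformulas, mem_subformulas_self])

theorem mem_subformulas_of_box {A B : Fml} (h : B.box ∈ A.subformulas) : B ∈ A.subformulas :=
  subformulas_subset_of_mem h (by simp [subformulas, mem_subformulas_self])

def subformulaAtoms (A : Fml) : Finset Fml := A.subformulas.biUnion atoms

theorem atoms_subset_subformulaAtoms {A B : Fml} (h : B ∈ A.subformulas) :
    B.atoms ⊆ A.subformulaAtoms :=
  Finset.subset_biUnion_of_mem atoms h

theorem box_mem_subformulaAtoms {A B : Fml} (h : B.box ∈ A.subformulas) :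
    B.box ∈ A.subformulaAtoms :=
  atoms_subset_subformulaAtoms h (Finset.mem_singleton_self _)

def conj : List Fml → Fml
  | [] => top
  | B :: L => B.and (conj L)

def eval (w : Finset Fml) : Fml → Bool
  | var n => decide (var n ∈ w)
  | bot => false
  | imp B C => !eval w B || eval w C
  | box B => decide (box B ∈ w)

end Fml

open Fml

structure IsValuation (val : Fml → Bool) : Prop where
  bot : val Fml.bot = false
  imp : ∀ B C : Fml, val (B.imp C) = (!val B || val C)

theorem isTautology_iff {A : Fml} :
    IsTautology A ↔ ∀ val, IsValuation val → val A = true :=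
  ⟨fun h val hv => h val hv.bot hv.imp, fun h val h₀ h₁ => h val ⟨h₀, h₁⟩⟩

namespace IsValuation

variable {val : Fml → Bool}

theorem neg (hv : IsValuation val) (B : Fml) : val B.neg = !val B := by
  simp [Fml.neg, hv.imp, hv.bot]

theorem conj (hv : IsValuation val) (L : List Fml) : val (Fml.conj L) = L.all val := by
  induction L with
  | nil => simp [Fml.conj, top, hv.neg, hv.bot]
  | cons B L ih =>
    simp only [Fml.conj, Fml.and, hv.neg, hv.imp, ih, List.all_cons]
    cases val B <;> simp

theorem foldr_imp (hv : IsValuation val) (L : List Fml) (D : Fml) :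
    val (L.foldr Fml.imp D) = true ↔ ((∀ B ∈ L, val B = true) → val D = true) := by
  induction L with
  | nil => simp
  | cons B L ih => cases h : val B <;> simp [hv.imp, ih, h]

theorem eq_eval (hv : IsValuation val) {w : Finset Fml} {D : Fml}
    (h : ∀ B ∈ D.atoms, val B = decide (B ∈ w)) : val D = eval w D := by
  induction D with
  | var n | box B => exact h _ (Finset.mem_singleton_self _)
  | bot => exact hv.bot
  | imp B C ihB ihC =>
    simp only [atoms, Finset.mem_union] at h
    rw [hv.imp, eval, ihB fun E hE => h E (.inl hE), ihC fun E hE => h E (.inr hE)]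

end IsValuation

open Classical in
theorem IsSat.isValuation {W : Type*} {F : MNFrame W} {Sat : W → Fml → Prop}
    (hSat : IsSat F Sat) (x : W) : IsValuation fun B => decide (Sat x B) :=
  ⟨decide_eq_false (hSat.bot x), fun B C => by
    by_cases hB : Sat x B <;> by_cases hC : Sat x C <;> simp [hSat.imp, hB, hC]⟩

namespace MNProv

variable {Ax : Fml → Prop}

theorem valid {W : Type*} {F : MNFrame W} (hAx : ∀ B, Ax B → Valid F B) {A : Fml}
    (h : MNProv Ax A) : Valid F A := by
  intro Sat hSat
  induction h with
  | taut hA =>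
    classical
    exact fun x => of_decide_eq_true (isTautology_iff.mp hA _ (hSat.isValuation x))
  | ax hA => exact hAx _ hA Sat hSat
  | mp _ _ ihBC ihB => exact fun x => (hSat.imp x _ _).mp (ihBC x) (ihB x)
  | nec _ ih =>
    intro x
    rw [hSat.box]
    intro V hV
    obtain ⟨y, hy⟩ := F.rel_nonempty x V hV
    exact ⟨y, hy, ih y⟩
  | rm _ ih =>
    intro x
    simp only [hSat.imp, hSat.box]
    intro hB V hV
    obtain ⟨y, hyV, hyB⟩ := hB V hV
    exact ⟨y, hyV, (hSat.imp y _ _).mp (ih y) hyB⟩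

theorem mp_foldr : ∀ (L : List Fml) {D : Fml},
    MNProv Ax (L.foldr Fml.imp D) → (∀ B ∈ L, MNProv Ax B) → MNProv Ax D
  | [], _, h, _ => h
  | B :: L, _, h, hL =>
    mp_foldr L (mp h (hL B List.mem_cons_self)) fun C hC => hL C (List.mem_cons_of_mem B hC)

theorem of_entails {S : Finset Fml} {D : Fml} (hS : ∀ B ∈ S, MNProv Ax B)
    (h : ∀ val, IsValuation val → (∀ B ∈ S, val B = true) → val D = true) :
    MNProv Ax D := by
  refine mp_foldr S.toList (taut (isTautology_iff.mpr fun val hv => ?_)) (by simpa using hS)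
  rw [hv.foldr_imp]
  simpa using h val hv

end MNProv

def MNFrame.sat {W : Type*} (F : MNFrame W) (v : ℕ → Set W) : W → Fml → Prop
  | x, .var n => x ∈ v n
  | _, .bot => False
  | x, .imp B C => F.sat v x B → F.sat v x C
  | x, .box B => ∀ V, F.rel x V → ∃ y ∈ V, F.sat v y B

theorem MNFrame.isSat_sat {W : Type*} (F : MNFrame W) (v : ℕ → Set W) : IsSat F (F.sat v) :=
  ⟨fun _ h => h, fun _ _ _ => Iff.rfl, fun _ _ => Iff.rfl⟩

namespace Canonical

variable (Ax : Fml → Prop)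

def literal (w : Finset Fml) (B : Fml) : Fml := if B ∈ w then B else B.neg

noncomputable def charFml (P w : Finset Fml) : Fml := Fml.conj (P.toList.map (literal w))

def Consistent (P w : Finset Fml) : Prop := ¬ MNProv Ax (charFml P w).neg

theorem _root_.IsValuation.charFml_eq_true_iff {val : Fml → Bool} (hv : IsValuation val)
    (P w : Finset Fml) : val (charFml P w) = true ↔ ∀ B ∈ P, val B = decide (B ∈ w) := by
  simp only [charFml, hv.conj, List.all_eq_true, List.mem_map, Finset.mem_toList]
  refine ⟨fun h B hB => ?_, ?_⟩
  · have := h _ ⟨B, hB, rfl⟩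
    by_cases hBw : B ∈ w <;> simp_all [literal, hv.neg]
  · rintro h _ ⟨B, hB, rfl⟩
    by_cases hBw : B ∈ w <;> simp_all [literal, hv.neg]

variable {Ax} {P : Finset Fml}

theorem provable_of_forall_consistent {D : Fml} (hD : D.atoms ⊆ P)
    (h : ∀ w ⊆ P, Consistent Ax P w → eval w D = true) : MNProv Ax D := by
  classical
  refine MNProv.of_entails (S := ((P.powerset.filter fun w => eval w D = false).image
    fun w => (charFml P w).neg)) ?_ fun val hv hS => ?_
  · simp only [Finset.mem_image, Finset.mem_filter, Finset.mem_powerset]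
    rintro _ ⟨w, ⟨hwP, hwD⟩, rfl⟩
    by_contra hw
    simp [h w hwP hw] at hwD
  · set w := P.filter fun B => val B = true
    have hvw : ∀ B ∈ P, val B = decide (B ∈ w) := by
      intro B hB
      cases hB' : val B <;> simp [w, hB, hB']
    rw [hv.eq_eval fun B hB => hvw B (hD hB)]
    by_contra hwD
    have hχ : val (charFml P w).neg = true := hS _ (Finset.mem_image_of_mem _
      (Finset.mem_filter.mpr
        ⟨Finset.mem_powerset.mpr (Finset.filter_subset _ _), by simpa using hwD⟩))
    simp [hv.neg, (hv.charFml_eq_true_iff P w).mpr hvw] at hχ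

theorem not_consistent_of_provable {x : Finset Fml} {E : Fml} (hE : MNProv Ax E)
    (h : ∀ val, IsValuation val → (∀ B ∈ P, val B = decide (B ∈ x)) → val E = false) :
    ¬ Consistent Ax P x := by
  refine not_not_intro (MNProv.of_entails (S := {E}) (by simpa using hE) fun val hv hE => ?_)
  rw [hv.neg, Bool.not_eq_true', Bool.eq_false_iff]
  intro hχ
  simp_all [h val hv ((hv.charFml_eq_true_iff P x).mp hχ)]

theorem exists_consistent_eval_eq_false {x : Finset Fml} (hx : Consistent Ax P x) {C : Fml}
    (hCP : C.box ∈ P) (hCx : C.box ∉ x) (hC : C.atoms ⊆ P) :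
    ∃ w ⊆ P, Consistent Ax P w ∧ eval w C = false := by
  by_contra! h
  simp only [Bool.not_eq_false] at h
  refine not_consistent_of_provable (MNProv.nec (provable_of_forall_consistent hC h))
    (fun val _ hval => ?_) hx
  simpa [hCx] using hval _ hCP

theorem exists_consistent_eval_eq_true_eval_eq_false {x : Finset Fml} (hx : Consistent Ax P x)
    {B C : Fml} (hBP : B.box ∈ P) (hBx : B.box ∈ x) (hCP : C.box ∈ P) (hCx : C.box ∉ x)
    (hB : B.atoms ⊆ P) (hC : C.atoms ⊆ P) :
    ∃ w ⊆ P, Consistent Ax P w ∧ eval w B = true ∧ eval w C = false := by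
  by_contra! h
  have hBC : MNProv Ax (B.imp C) := by
    refine provable_of_forall_consistent (Finset.union_subset hB hC) fun w hwP hw => ?_
    have := h w hwP hw
    cases hwB : eval w B <;> simp_all [eval]
  refine not_consistent_of_provable (MNProv.rm hBC) (fun val hv hval => ?_) hx
  simp [hv.imp, hval _ hBP, hval _ hCP, hBx, hCx]

variable (Ax P)

def World : Type := {w : Finset Fml // w ⊆ P ∧ Consistent Ax P w}

instance : Finite (World Ax P) :=
  Finite.of_injective
    (fun w : World Ax P => (⟨w.1, Finset.mem_powerset.mpr w.2.1⟩ : P.powerset))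
    fun _ _ h => Subtype.ext (congrArg Subtype.val h :)

def varVal (n : ℕ) : Set (World Ax P) := {y | Fml.var n ∈ y.1}

variable (A : Fml)

def rel (x : World Ax A.subformulaAtoms) (V : Set (World Ax A.subformulaAtoms)) : Prop :=
  ∃ C : Fml, C.box ∈ A.subformulas ∧ C.box ∉ x.1 ∧ {y | eval y.1 C = false} ⊆ V

def frame [Nonempty (World Ax A.subformulaAtoms)] : MNFrame (World Ax A.subformulaAtoms) where
  nonempty := inferInstance
  rel := rel Ax A
  rel_nonempty := by
    rintro x V ⟨C, hCA, hCx, hCV⟩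
    obtain ⟨w, hwP, hw, hwC⟩ := exists_consistent_eval_eq_false x.2.2
      (box_mem_subformulaAtoms hCA) hCx (atoms_subset_subformulaAtoms (mem_subformulas_of_box hCA))
    exact ⟨⟨w, hwP, hw⟩, hCV hwC⟩
  mono := by
    rintro x V U ⟨C, hCA, hCx, hCV⟩ hVU
    exact ⟨C, hCA, hCx, hCV.trans hVU⟩

theorem sat_iff [Nonempty (World Ax A.subformulaAtoms)] {B : Fml} (hB : B ∈ A.subformulas)
    (x : World Ax A.subformulaAtoms) :
    (frame Ax A).sat (varVal Ax _) x B ↔ eval x.1 B = true := by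
  induction B generalizing x with
  | var n => simp [MNFrame.sat, eval, varVal]
  | bot => simp [MNFrame.sat, eval]
  | imp B C ihB ihC =>
    rw [MNFrame.sat, ihB (mem_subformulas_of_imp_left hB), ihC (mem_subformulas_of_imp_right hB)]
    simp only [eval]
    cases eval x.1 B <;> cases eval x.1 C <;> simp
  | box B ih =>
    have hBA := mem_subformulas_of_box hB
    simp only [MNFrame.sat, eval, decide_eq_true_iff]
    constructor
    · intro hsat
      by_contra hBx
      obtain ⟨y, hyB, hy⟩ := hsat _ ⟨B, hB, hBx, le_rfl⟩
      simp_all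
    · rintro hBx V ⟨C, hCA, hCx, hCV⟩
      obtain ⟨w, hwP, hw, hwB, hwC⟩ := exists_consistent_eval_eq_true_eval_eq_false x.2.2
        (box_mem_subformulaAtoms hB) hBx (box_mem_subformulaAtoms hCA) hCx
        (atoms_subset_subformulaAtoms hBA)
        (atoms_subset_subformulaAtoms (mem_subformulas_of_box hCA))
      exact ⟨⟨w, hwP, hw⟩, hCV hwC, (ih hBA _).mpr hwB⟩

end Canonical

theorem MN.of_forall_finite_valid {A : Fml}
    (h : ∀ (W : Type) (F : MNFrame W), Finite W → Valid F A) : MN A := by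
  by_contra hA
  obtain ⟨w, hwP, hw, hwA⟩ :
      ∃ w ⊆ A.subformulaAtoms, Canonical.Consistent _ _ w ∧ eval w A = false := by
    by_contra! h'
    exact hA (Canonical.provable_of_forall_consistent
      (atoms_subset_subformulaAtoms (mem_subformulas_self A)) fun w hwP hw => by
        simpa using h' w hwP hw)
  let x : Canonical.World (fun _ => False) A.subformulaAtoms := ⟨w, hwP, hw⟩
  have : Nonempty (Canonical.World (fun _ => False) A.subformulaAtoms) := ⟨x⟩
  have hAx := h _ (Canonical.frame _ A) inferInstance _
    (MNFrame.isSat_sat _ (Canonical.varVal _ _)) x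
  simpa [x, hwA] using (Canonical.sat_iff _ A (mem_subformulas_self A) x).mp hAx

/-- A formula is a theorem of MN iff it is valid in all MN-frames
iff it is valid in all finite MN-frames. -/
theorem stmt5 (A : Fml) :
    (MN A ↔ ∀ (W : Type) (F : MNFrame W), Valid F A) ∧
    (MN A ↔ ∀ (W : Type) (F : MNFrame W), Finite W → Valid F A) := by
  have sound : MN A → ∀ (W : Type) (F : MNFrame W), Valid F A :=
    fun h _ _ => MNProv.valid (fun _ h => h.elim) h
  exact ⟨⟨sound, fun h => MN.of_forall_finite_valid fun W F _ => h W F⟩,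
    ⟨fun h W F _ => sound h W F, MN.of_forall_finite_valid⟩⟩
end

section
/- The logic MN is strictly weaker than the normal modal logic K: the distribution axiom □(p → q) → (□p → □q), for propositional variables p and q, is not a theorem of MN. -/
/-- Two-world countermodel: `□A` means "A somewhere"; variable `p` is true
only at world `true`, all other variables are false everywhere. -/
def satP (p : ℕ) : Bool → Fml → Bool
  | w, .var n => n == p && w
  | _, .bot => false
  | w, .imp A B => !satP p w A || satP p w B
  | _, .box A => satP p true A || satP p false A

lemma satP_sound (p : ℕ) {A : Fml} (h : MN A) : ∀ w, satP p w A = true := by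
  induction h with
  | taut ht => intro w; exact ht (satP p w) rfl (fun B C => rfl)
  | ax ha => exact ha.elim
  | mp h1 h2 ih1 ih2 =>
      intro w
      have := ih1 w
      simp only [satP, Bool.or_eq_true, Bool.not_eq_true'] at this
      rcases this with h | h
      · rw [ih2 w] at h; exact absurd h (by simp)
      · exact h
  | nec h ih => intro w; simp [satP, ih true]
  | rm h ih =>
      intro w
      have ht := ih true
      have hf := ih false
      simp only [satP, Bool.or_eq_true, Bool.not_eq_true'] at ht hf ⊢
      rcases ht with ht | ht <;> rcases hf with hf | hf <;> simp [ht, hf]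

/-- MN is strictly weaker than K: the distribution axiom
□(p → q) → (□p → □q), for (distinct) propositional variables p and q, is not a
theorem of MN. -/
theorem stmt15 (p q : ℕ) (hpq : p ≠ q) :
    ¬ MN (((Fml.var p).imp (Fml.var q)).box.imp
        ((Fml.var p).box.imp (Fml.var q).box)) := by
  intro h
  have := satP_sound p h false
  simp [satP, hpq, Ne.symm hpq] at this
end
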